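/- If X inverts weak homotopy equivalences and Y is a locally compact Hausdorff space, then the mapping space X^Y = C(Y,X) with the compact-open topology also inverts weak homotopy equivalences. -/

import Mathlib

open ContinuousMap Topology

noncomputable section

/-- The setoid of homotopy on continuous maps `C(A, X)`. -/
def homotopySetoid (A X : Type*) [TopologicalSpace A] [TopologicalSpace X] :
    Setoid C(A, X) :=
  ⟨ContinuousMap.Homotopic, ContinuousMap.Homotopic.equivalence⟩

/-- `[A, X]`: homotopy classes of continuous maps `A → X`. -/
def HtpyClasses (A X : Type*) [TopologicalSpace A] [TopologicalSpace X] : Type _ :=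
  Quotient (homotopySetoid A X)

/-- Precomposition `f^* : [B, X] → [A, X]`, `[g] ↦ [g ∘ f]`. -/
def precomp {A B X : Type*} [TopologicalSpace A] [TopologicalSpace B] [TopologicalSpace X]
    (f : C(A, B)) : HtpyClasses B X → HtpyClasses A X :=
  Quotient.map (fun g => g.comp f)
    (fun _ _ h => h.comp (ContinuousMap.Homotopic.refl f))

/-- The induced map on path components. -/
def zerothMap {A B : Type*} [TopologicalSpace A] [TopologicalSpace B] (f : C(A, B)) :
    ZerothHomotopy A → ZerothHomotopy B :=
  Quotient.map f (fun _ _ h => Nonempty.map (fun p => p.map f.continuous) h)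

/-- The induced map on `n`-th homotopy groups. -/
def piMap {A B : Type*} [TopologicalSpace A] [TopologicalSpace B] (f : C(A, B)) (n : ℕ)
    (a : A) : HomotopyGroup (Fin n) A a → HomotopyGroup (Fin n) B (f a) :=
  Quotient.map
    (fun p => ⟨f.comp p.1, fun y hy => by rw [ContinuousMap.comp_apply, p.2 y hy]⟩)
    (fun _ _ h => Nonempty.map (fun H => H.compContinuousMap f) h)

/-- A continuous map is a weak homotopy equivalence if it induces a bijection on path
components and isomorphisms on all homotopy groups at all basepoints. -/
def IsWeakHomotopyEquiv {A B : Type*} [TopologicalSpace A] [TopologicalSpace B]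
    (f : C(A, B)) : Prop :=
  Function.Bijective (zerothMap f) ∧ ∀ (n : ℕ) (a : A), Function.Bijective (piMap f n a)

/-- `X` inverts weak homotopy equivalences: every weak homotopy equivalence `f : A → B`
induces a bijection `f^* : [B, X] → [A, X]`. -/
def InvertsWeakEquivs (X : Type) [TopologicalSpace X] : Prop :=
  ∀ (A B : Type) [TopologicalSpace A] [TopologicalSpace B] (f : C(A, B)),
    IsWeakHomotopyEquiv f → Function.Bijective (precomp (X := X) f)

/-!
Since `Y` is locally compact, currying identifies maps `A → C(Y, X)` with maps `A × Y → X`, and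
homotopies with homotopies, so `[A, C(Y, X)] ≃ [A × Y, X]` naturally in `A`. Under this
identification `f^*` on `[-, C(Y, X)]` becomes `(f × id_Y)^*` on `[-, X]`, and `f × id_Y` is again a
weak homotopy equivalence because `π₀` and the homotopy groups of a product split as products.
-/

section WeakHomotopyEquiv

variable {A B C D : Type*} [TopologicalSpace A] [TopologicalSpace B] [TopologicalSpace C]
  [TopologicalSpace D]

def ZerothHomotopy.prodEquiv : ZerothHomotopy (A × C) ≃ ZerothHomotopy A × ZerothHomotopy C where
  toFun z := (zerothMap ContinuousMap.fst z, zerothMap ContinuousMap.snd z)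
  invFun w :=
    Quotient.map₂ Prod.mk (fun _ _ hp _ _ hq => Nonempty.map2 Path.prod hp hq) w.1 w.2
  left_inv z := by
    induction z using Quotient.ind
    rfl
  right_inv := by
    rintro ⟨z, w⟩
    induction z using Quotient.ind
    induction w using Quotient.ind
    rfl

def HomotopyGroup.prodEquiv (n : ℕ) (a : A) (c : C) :
    HomotopyGroup (Fin n) (A × C) (a, c) ≃
      HomotopyGroup (Fin n) A a × HomotopyGroup (Fin n) C c where
  toFun z := (piMap ContinuousMap.fst n (a, c) z, piMap ContinuousMap.snd n (a, c) z)
  invFun w :=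
    Quotient.map₂ (fun p q => ⟨p.1.prodMk q.1, fun t ht => Prod.ext (p.2 t ht) (q.2 t ht)⟩)
      (fun _ _ hp _ _ hq => Nonempty.map2 HomotopyRel.prod hp hq) w.1 w.2
  left_inv z := by
    induction z using Quotient.ind
    rfl
  right_inv := by
    rintro ⟨z, w⟩
    induction z using Quotient.ind
    induction w using Quotient.ind
    rfl

theorem zerothMap_prodMap (f : C(A, B)) (g : C(C, D)) :
    zerothMap (f.prodMap g) =
      ZerothHomotopy.prodEquiv.symm ∘ Prod.map (zerothMap f) (zerothMap g) ∘
        ZerothHomotopy.prodEquiv := by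
  funext z
  induction z using Quotient.ind
  rfl

theorem piMap_prodMap (f : C(A, B)) (g : C(C, D)) (n : ℕ) (a : A) (c : C) :
    piMap (f.prodMap g) n (a, c) =
      (HomotopyGroup.prodEquiv n (f a) (g c)).symm ∘ Prod.map (piMap f n a) (piMap g n c) ∘
        HomotopyGroup.prodEquiv n a c := by
  funext z
  induction z using Quotient.ind
  rfl

theorem isWeakHomotopyEquiv_id : IsWeakHomotopyEquiv (ContinuousMap.id A) := by
  have zeroth_id : zerothMap (ContinuousMap.id A) = id := by
    funext z
    induction z using Quotient.ind
    rfl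
  have pi_id (n : ℕ) (a : A) : piMap (ContinuousMap.id A) n a = id := by
    funext z
    induction z using Quotient.ind
    rfl
  exact ⟨zeroth_id ▸ Function.bijective_id, fun n a => pi_id n a ▸ Function.bijective_id⟩

theorem IsWeakHomotopyEquiv.prodMap {f : C(A, B)} {g : C(C, D)} (hf : IsWeakHomotopyEquiv f)
    (hg : IsWeakHomotopyEquiv g) : IsWeakHomotopyEquiv (f.prodMap g) := by
  refine ⟨?_, fun n ⟨a, c⟩ => ?_⟩
  · rw [zerothMap_prodMap]
    exact (Equiv.bijective _).comp ((hf.1.prodMap hg.1).comp (Equiv.bijective _))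
  · rw [piMap_prodMap]
    exact (Equiv.bijective _).comp (((hf.2 n a).prodMap (hg.2 n c)).comp (Equiv.bijective _))

end WeakHomotopyEquiv

section Curry

variable {A B X Y : Type*} [TopologicalSpace A] [TopologicalSpace B] [TopologicalSpace X]
  [TopologicalSpace Y]

theorem ContinuousMap.Homotopic.curry {k₀ k₁ : C(A × Y, X)} (h : k₀.Homotopic k₁) :
    k₀.curry.Homotopic k₁.curry := by
  obtain ⟨H⟩ := h
  exact ⟨{ toContinuousMap := (H.toContinuousMap.comp
              (Homeomorph.prodAssoc unitInterval A Y : C((unitInterval × A) × Y, _))).curry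
           map_zero_left a := ext fun y => by exact H.apply_zero (a, y)
           map_one_left a := ext fun y => by exact H.apply_one (a, y) }⟩

theorem ContinuousMap.Homotopic.uncurry [LocallyCompactSpace Y] {g₀ g₁ : C(A, C(Y, X))}
    (h : g₀.Homotopic g₁) : g₀.uncurry.Homotopic g₁.uncurry := by
  obtain ⟨H⟩ := h
  exact ⟨{ toContinuousMap := H.toContinuousMap.uncurry.comp
              ((Homeomorph.prodAssoc unitInterval A Y).symm : C(unitInterval × A × Y, _))
           map_zero_left x := congrArg (· x.2) (H.apply_zero x.1)
           map_one_left x := congrArg (· x.2) (H.apply_one x.1) }⟩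

variable (A X Y) in
def htpyClassesCurryEquiv [LocallyCompactSpace Y] :
    HtpyClasses (A × Y) X ≃ HtpyClasses A C(Y, X) where
  toFun := Quotient.map ContinuousMap.curry fun _ _ => Homotopic.curry
  invFun := Quotient.map ContinuousMap.uncurry fun _ _ => Homotopic.uncurry
  left_inv z := by
    induction z using Quotient.ind
    rfl
  right_inv z := by
    induction z using Quotient.ind
    rfl

theorem htpyClassesCurryEquiv_comp_precomp [LocallyCompactSpace Y] (f : C(A, B)) :
    htpyClassesCurryEquiv A X Y ∘ _root_.precomp (f.prodMap (ContinuousMap.id Y)) =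
      _root_.precomp f ∘ htpyClassesCurryEquiv B X Y := by
  funext z
  induction z using Quotient.ind
  rfl

end Curry

theorem stmt4_general (X Y : Type) [TopologicalSpace X] [TopologicalSpace Y]
    [LocallyCompactSpace Y] (h : InvertsWeakEquivs X) :
    InvertsWeakEquivs C(Y, X) := by
  intro A B _ _ f hf
  have hfY : Function.Bijective (precomp (X := X) (f.prodMap (ContinuousMap.id Y))) :=
    h (A × Y) (B × Y) _ (hf.prodMap isWeakHomotopyEquiv_id)
  rw [← Equiv.bijective_comp (htpyClassesCurryEquiv B X Y), ← htpyClassesCurryEquiv_comp_precomp]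
  exact (Equiv.bijective _).comp hfY

/-- If `X` inverts weak homotopy equivalences and `Y` is locally compact Hausdorff, then the
mapping space `C(Y, X)` with the compact-open topology also inverts weak homotopy
equivalences. -/
theorem stmt4 (X Y : Type) [TopologicalSpace X] [TopologicalSpace Y]
    [LocallyCompactSpace Y] [T2Space Y] (h : InvertsWeakEquivs X) :
    InvertsWeakEquivs C(Y, X) :=
  stmt4_general X Y h
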